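/- arXiv:2304.12728 — 6 statements merged into one kernel-verified Lean document; each statement's English description precedes it below -/
import Mathlib

section
/- Let 0 < k̲ < k̄ and set α_f = (2μη k̲ k̄)²/D, α_p = 1/D with D = 1 + (2μη k̲ k̄)² + μη(k̲ + k̄)². Then the equioscillation conditions hold: -ρ(k̲) = ρ(k*) and -ρ(k̄) = ρ(k*), where k* = √(k̲ k̄) and ρ(k) = 1 - α_p(1 + 2μηk²) - α_f(1 + (2μηk²)^{-1}). -/
theorem equioscillation (μ η kl ku : ℝ) (hμ : 0 < μ) (hη : 0 < η)
    (hkl : 0 < kl) (hlt : kl < ku) :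
    let D := 1 + (2*μ*η*kl*ku)^2 + μ*η*(kl + ku)^2
    let αf := (2*μ*η*kl*ku)^2 / D
    let αp := 1 / D
    let ρ := fun k : ℝ => 1 - αp * (1 + 2*μ*η*k^2) - αf * (1 + (2*μ*η*k^2)⁻¹)
    (-(ρ kl) = ρ (Real.sqrt (kl * ku))) ∧ (-(ρ ku) = ρ (Real.sqrt (kl * ku))) := by
  intro D αf αp ρ
  have hku : 0 < ku := hkl.trans hlt
  have hsq : Real.sqrt (kl * ku) ^ 2 = kl * ku := Real.sq_sqrt (by positivity)
  have hD : D ≠ 0 := ne_of_gt (by positivity)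
  constructor <;>
  · simp only [ρ, αf, αp, hsq]
    field_simp
    ring
end

section
/- With the optimized parameters α_f = (2μη k̲ k̄)²/D and α_p = 1/D, where D = 1 + (2μη k̲ k̄)² + μη(k̲ + k̄)², one has ρ(k̲) = ρ(k̄), i.e., the reduction factor takes equal values at the endpoints of the frequency interval. -/
theorem rho_endpoints_equal (μ η kl ku : ℝ) (hμ : 0 < μ) (hη : 0 < η)
    (hkl : 0 < kl) (hlt : kl < ku) :
    let D := 1 + (2*μ*η*kl*ku)^2 + μ*η*(kl + ku)^2
    let αf := (2*μ*η*kl*ku)^2 / D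
    let αp := 1 / D
    let ρ := fun k : ℝ => 1 - αp * (1 + 2*μ*η*k^2) - αf * (1 + (2*μ*η*k^2)⁻¹)
    ρ kl = ρ ku := by
  intro D αf αp ρ
  have hku : 0 < ku := hkl.trans hlt
  have hD : D ≠ 0 := by
    have : 0 < D := by positivity
    exact this.ne'
  have h1 : (2*μ*η*kl^2) ≠ 0 := by positivity
  have h2 : (2*μ*η*ku^2) ≠ 0 := by positivity
  simp only [ρ, αf, αp, D] at *
  field_simp
  ring
end

section
/- With optimized parameters α_f = (2μη k̲ k̄)²/D, α_p = 1/D, D = 1 + (2μη k̲ k̄)² + μη(k̲ + k̄)², the reduction factor satisfies |ρ(k)| < 1 for every k ∈ [k̲, k̄], where ρ(k) = 1 - α_p(1 + 2μηk²) - α_f(1 + (2μηk²)^{-1}). -/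
theorem abs_rho_lt_one (μ η kl ku : ℝ) (hμ : 0 < μ) (hη : 0 < η)
    (hkl : 0 < kl) (hlt : kl < ku) :
    let D := 1 + (2*μ*η*kl*ku)^2 + μ*η*(kl + ku)^2
    let αf := (2*μ*η*kl*ku)^2 / D
    let αp := 1 / D
    let ρ := fun k : ℝ => 1 - αp * (1 + 2*μ*η*k^2) - αf * (1 + (2*μ*η*k^2)⁻¹)
    ∀ k ∈ Set.Icc kl ku, |ρ k| < 1 := by
  intro D αf αp ρ k hk
  obtain ⟨hk1, hk2⟩ := hk
  have hk0 : 0 < k := lt_of_lt_of_le hkl hk1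
  have hku : 0 < ku := lt_trans hkl hlt
  set t : ℝ := 2*μ*η*k^2 with htdef
  set c : ℝ := 2*μ*η*kl*ku with hcdef
  set a : ℝ := 2*μ*η*kl^2 with hadef
  set b : ℝ := 2*μ*η*ku^2 with hbdef
  have ht : 0 < t := by positivity
  have hc : 0 < c := by positivity
  have hD : 0 < D := by
    show (0:ℝ) < 1 + (2*μ*η*kl*ku)^2 + μ*η*(kl + ku)^2
    positivity
  have hta : a ≤ t := by
    have : kl^2 ≤ k^2 := by nlinarith
    have h := mul_le_mul_of_nonneg_left this (by positivity : (0:ℝ) ≤ 2*μ*η)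
    simp only [hadef, htdef]; nlinarith
  have htb : t ≤ b := by
    have : k^2 ≤ ku^2 := by nlinarith
    have h := mul_le_mul_of_nonneg_left this (by positivity : (0:ℝ) ≤ 2*μ*η)
    simp only [hbdef, htdef]; nlinarith
  have hcab : c^2 = a*b := by simp only [hcdef, hadef, hbdef]; ring
  have h2D : 2*D = 2 + 2*c^2 + a + b + 2*c := by
    show 2*(1 + (2*μ*η*kl*ku)^2 + μ*η*(kl + ku)^2) = _
    simp only [hcdef, hadef, hbdef]; ring
  have h5 : t^2 + c^2 ≤ (a+b)*t := by nlinarith [mul_nonneg (sub_nonneg.2 hta) (sub_nonneg.2 htb)]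
  have heq : t + c^2*t⁻¹ = (t^2+c^2)/t := by field_simp
  have hb2 : t + c^2*t⁻¹ ≤ a + b := by
    rw [heq, div_le_iff₀ ht]; linarith
  have key : (1 + t) + (c^2 + c^2*t⁻¹) < 2*D := by
    rw [h2D]; nlinarith
  have hsum : αp * (1 + t) + αf * (1 + t⁻¹) = ((1 + t) + (c^2 + c^2*t⁻¹))/D := by
    show 1/D * (1+t) + c^2/D * (1+t⁻¹) = _
    field_simp
  rw [abs_lt]
  constructor
  · show -1 < 1 - αp * (1 + t) - αf * (1 + t⁻¹)
    have h6 : αp * (1 + t) + αf * (1 + t⁻¹) < 2 := by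
      rw [hsum, div_lt_iff₀ hD]; linarith
    linarith
  · show 1 - αp * (1 + t) - αf * (1 + t⁻¹) < 1
    have h7 : 0 < αp * (1 + t) + αf * (1 + t⁻¹) := by
      have : (0:ℝ) < ((1 + t) + (c^2 + c^2*t⁻¹))/D := by positivity
      rw [hsum]; linarith
    linarith
end

section
/- With optimized parameters α_f = (2μη k̲ k̄)²/D, α_p = 1/D, D = 1 + (2μη k̲ k̄)² + μη(k̲ + k̄)², the maximum of |ρ(k)| over [k̲, k̄] equals ρ(√(k̲ k̄)) = 1 - (√α_f + √α_p)², i.e., |ρ(k)| ≤ ρ(√(k̲ k̄)) for all k ∈ [k̲, k̄]. -/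
/-!
Write `u = 2μηk²`, so that `ρ = rate αp αf u` with `αf = αp a²` for `a = 2μηk̲k̄`, and `u` ranges
over `[p, q] = [2μηk̲², 2μηk̄²]` with `a² = pq`. By AM-GM, `αp u + αf u⁻¹` is smallest at `u = a`,
so `rate` is largest there, with value `1 - (√αf + √αp)²`. On `[p, q]` the convex function
`u ↦ αp u + αf u⁻¹` is largest at the endpoints, where it takes the same value since `αf = αp pq`;
so `rate` is smallest at `u = p`. The choice of `D` makes `rate p = -rate a`.
-/

open Set

noncomputable def rate (αp αf u : ℝ) : ℝ := 1 - αp * (1 + u) - αf * (1 + u⁻¹)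

section

variable {αp αf a p q u : ℝ}

theorem rate_le_rate (hαp : 0 ≤ αp) (ha : 0 < a) (hu : 0 < u) (hαf : αf = αp * a ^ 2) :
    rate αp αf u ≤ rate αp αf a := by
  have h : rate αp αf a - rate αp αf u = αp * (u - a) ^ 2 / u := by
    unfold rate; subst hαf; field_simp; ring
  have : 0 ≤ αp * (u - a) ^ 2 / u := by positivity
  linarith

theorem rate_le_rate_of_mem_Icc (hαp : 0 ≤ αp) (hp : 0 < p) (hu : u ∈ Icc p q)
    (hαf : αf = αp * (p * q)) : rate αp αf p ≤ rate αp αf u := by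
  have hu0 : 0 < u := hp.trans_le hu.1
  have h : rate αp αf u - rate αp αf p = αp * ((u - p) * (q - u)) / u := by
    unfold rate; subst hαf; field_simp; ring
  have : 0 ≤ αp * ((u - p) * (q - u)) / u :=
    div_nonneg (mul_nonneg hαp (mul_nonneg (sub_nonneg.2 hu.1) (sub_nonneg.2 hu.2))) hu0.le
  linarith

theorem rate_eq_one_sub_sq (hαp : 0 ≤ αp) (ha : 0 < a) (hαf : αf = αp * a ^ 2) :
    rate αp αf a = 1 - (√αf + √αp) ^ 2 := by
  have hsqrt : √αf = √αp * a := by rw [hαf, Real.sqrt_mul hαp, Real.sqrt_sq ha.le]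
  have hsq : (√αp * a + √αp) ^ 2 = √αp ^ 2 * (1 + a) ^ 2 := by ring
  rw [hsqrt, hsq, Real.sq_sqrt hαp, hαf]
  unfold rate
  field_simp
  ring

theorem rate_add_rate_eq_zero {D : ℝ} (hp : 0 < p) (ha : 0 < a) (hpq : a ^ 2 = p * q)
    (hD : D = 1 + a ^ 2 + (p + q) / 2 + a) :
    rate (1 / D) (a ^ 2 / D) p + rate (1 / D) (a ^ 2 / D) a = 0 := by
  obtain rfl : q = a ^ 2 / p := by field_simp; linarith
  subst hD
  unfold rate
  field_simp
  ring

end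

theorem abs_rho_max (μ η kl ku : ℝ) (hμ : 0 < μ) (hη : 0 < η)
    (hkl : 0 < kl) (hlt : kl < ku) :
    let D := 1 + (2*μ*η*kl*ku)^2 + μ*η*(kl + ku)^2
    let αf := (2*μ*η*kl*ku)^2 / D
    let αp := 1 / D
    let ρ := fun k : ℝ => 1 - αp * (1 + 2*μ*η*k^2) - αf * (1 + (2*μ*η*k^2)⁻¹)
    (∀ k ∈ Set.Icc kl ku, |ρ k| ≤ ρ (Real.sqrt (kl * ku))) ∧
    ρ (Real.sqrt (kl * ku)) = 1 - (Real.sqrt αf + Real.sqrt αp)^2 := by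
  intro D αf αp ρ
  have hku : 0 < ku := hkl.trans hlt
  have ha : 0 < 2*μ*η*kl*ku := by positivity
  have hp : 0 < 2*μ*η*kl^2 := by positivity
  have hαp : 0 ≤ αp := by positivity
  have hαf : αf = αp * (2*μ*η*kl*ku)^2 := by simp only [αf, αp]; ring
  have hρmid : ρ √(kl * ku) = rate αp αf (2*μ*η*kl*ku) := by
    show rate αp αf (2*μ*η*√(kl * ku)^2) = _
    rw [Real.sq_sqrt (by positivity), ← mul_assoc]
  have hequi : rate αp αf (2*μ*η*kl^2) = -rate αp αf (2*μ*η*kl*ku) :=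
    eq_neg_of_add_eq_zero_left (rate_add_rate_eq_zero (q := 2*μ*η*ku^2) hp ha (by ring)
      (by simp only [D]; ring))
  refine ⟨fun k hk => ?_, hρmid ▸ rate_eq_one_sub_sq hαp ha hαf⟩
  have hu : 2*μ*η*k^2 ∈ Icc (2*μ*η*kl^2) (2*μ*η*ku^2) := by
    have hk0 : 0 ≤ k := hkl.le.trans hk.1
    exact ⟨by gcongr; exact hk.1, by gcongr; exact hk.2⟩
  show |rate αp αf (2*μ*η*k^2)| ≤ _
  rw [hρmid, abs_le]
  refine ⟨?_, rate_le_rate hαp ha (hp.trans_le hu.1) hαf⟩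
  rw [← hequi]
  exact rate_le_rate_of_mem_Icc hαp hp hu (by rw [hαf]; ring)
end

section
/- The pair of equations -ρ(k̲) = ρ(k*(α_f,α_p)) and -ρ(k̄) = ρ(k*(α_f,α_p)), where k*(α_f,α_p)⁴ = α_f/(α_p(2μη)²) and ρ(k) = 1 - α_p(1 + 2μηk²) - α_f(1 + (2μηk²)^{-1}), is satisfied by α_f = (2μη k̲ k̄)²/D and α_p = 1/D with D = 1 + (2μη k̲ k̄)² + μη(k̲ + k̄)². -/
theorem optimized_params_solve_equioscillation (μ η kl ku ks : ℝ) (hμ : 0 < μ) (hη : 0 < η)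
    (hkl : 0 < kl) (hlt : kl < ku)
    (hks : 0 < ks)
    (hks4 : ks^4 = ((2*μ*η*kl*ku)^2 / (1 + (2*μ*η*kl*ku)^2 + μ*η*(kl + ku)^2))
      / ((1 / (1 + (2*μ*η*kl*ku)^2 + μ*η*(kl + ku)^2)) * (2*μ*η)^2)) :
    let D := 1 + (2*μ*η*kl*ku)^2 + μ*η*(kl + ku)^2
    let αf := (2*μ*η*kl*ku)^2 / D
    let αp := 1 / D
    let ρ := fun k : ℝ => 1 - αp * (1 + 2*μ*η*k^2) - αf * (1 + (2*μ*η*k^2)⁻¹)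
    (-(ρ kl) = ρ ks) ∧ (-(ρ ku) = ρ ks) := by
  intro D αf αp ρ
  have hku : 0 < ku := hkl.trans hlt
  have hD : 0 < D := by positivity
  have hμη : (0:ℝ) < 2*μ*η := by positivity
  have h4 : ks^4 = (kl*ku)^2 := by
    rw [hks4]
    field_simp
  have hks2 : ks^2 = kl*ku := by
    have h1 : (ks^2)^2 = (kl*ku)^2 := by rw [← h4]; ring
    nlinarith [sq_nonneg ks, mul_pos hkl hku, sq_nonneg (ks^2 - kl*ku), sq_nonneg (ks^2 + kl*ku)]
  constructor <;>
  · show -(1 - αp * _ - αf * _) = 1 - αp * _ - αf * _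
    simp only [αp, αf, D, hks2]
    have h1 : (2*μ*η*kl^2) ≠ 0 := by positivity
    have h2 : (2*μ*η*ku^2) ≠ 0 := by positivity
    have h3 : (2*μ*η*(kl*ku)) ≠ 0 := by positivity
    have hD' : (1 + (2*μ*η*kl*ku)^2 + μ*η*(kl + ku)^2) ≠ 0 := ne_of_gt hD
    field_simp
    ring
end

section
/- Suppose α_p = (1 + 2μη k̲ k̄)^{-2} and α_f = (2μη k̲ k̄)²(1 + 2μη k̲ k̄)^{-2}. If 1 + 2μη k̲ k̄ > √(2μη)(k̄ - k̲), then |ρ(k)| < 1 for all k ∈ [k̲, k̄], where ρ(k) = 1 - α_p(1 + 2μηk²) - α_f(1 + (2μηk²)^{-1}). -/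
theorem case1_abs_rho_lt_one (μ η kl ku : ℝ) (hμ : 0 < μ) (hη : 0 < η)
    (hkl : 0 < kl) (hlt : kl < ku)
    (hcond : 1 + 2*μ*η*kl*ku > Real.sqrt (2*μ*η) * (ku - kl)) :
    let αp := 1 / (1 + 2*μ*η*kl*ku)^2
    let αf := (2*μ*η*kl*ku)^2 / (1 + 2*μ*η*kl*ku)^2
    let ρ := fun k : ℝ => 1 - αp * (1 + 2*μ*η*k^2) - αf * (1 + (2*μ*η*k^2)⁻¹)
    ∀ k ∈ Set.Icc kl ku, |ρ k| < 1 := by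
  intro αp αf ρ k hk
  obtain ⟨hk1, hk2⟩ := hk
  have hk0 : 0 < k := lt_of_lt_of_le hkl hk1
  have hc : 0 < 2*μ*η := by positivity
  have hs : Real.sqrt (2*μ*η) ^ 2 = 2*μ*η := Real.sq_sqrt hc.le
  have ht : 0 ≤ Real.sqrt (2*μ*η) * (ku - kl) := by
    have := Real.sqrt_nonneg (2*μ*η)
    nlinarith
  have hkey : 2*μ*η*(ku-kl)^2 < (1 + 2*μ*η*kl*ku)^2 := by
    have := mul_self_lt_mul_self ht hcond
    nlinarith [this, hs]
  have hquad : (2*μ*η*k^2 - 2*μ*η*kl^2) * (2*μ*η*k^2 - 2*μ*η*ku^2) ≤ 0 := by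
    have h1 : kl^2 ≤ k^2 := by nlinarith
    have h2 : k^2 ≤ ku^2 := by nlinarith
    nlinarith [mul_nonneg (sub_nonneg.2 h1) (sub_nonneg.2 h2), hc, mul_pos hc hc]
  have hx : 0 < 2*μ*η*k^2 := by nlinarith [sq_nonneg k, mul_pos hc (mul_pos hk0 hk0)]
  have hSm : (0:ℝ) < 1 + 2*μ*η*kl*ku := by nlinarith [mul_pos hc (mul_pos hkl (hkl.trans hlt))]
  have hS : (0:ℝ) < (1 + 2*μ*η*kl*ku)^2 := pow_pos hSm 2
  have key : (1 + 2*μ*η*k^2) * (2*μ*η*k^2) + (2*μ*η*kl*ku)^2 * (2*μ*η*k^2 + 1)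
      < 2 * ((1 + 2*μ*η*kl*ku)^2 * (2*μ*η*k^2)) := by
    nlinarith [hkey, hquad, hx]
  simp only [αp, αf, ρ]
  rw [abs_lt]
  constructor
  · rw [neg_lt, ← sub_pos]
    have h2 : 1 / (1 + 2*μ*η*kl*ku)^2 * (1 + 2*μ*η*k^2)
        + (2*μ*η*kl*ku)^2 / (1 + 2*μ*η*kl*ku)^2 * (1 + (2*μ*η*k^2)⁻¹) < 2 := by
      have hxne : (2*μ*η*k^2) ≠ 0 := hx.ne'
      have hSne : (1 + 2*μ*η*kl*ku) ≠ 0 := hSm.ne'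
      have e : 1 / (1 + 2*μ*η*kl*ku)^2 * (1 + 2*μ*η*k^2)
          + (2*μ*η*kl*ku)^2 / (1 + 2*μ*η*kl*ku)^2 * (1 + (2*μ*η*k^2)⁻¹)
          = ((1 + 2*μ*η*k^2) * (2*μ*η*k^2) + (2*μ*η*kl*ku)^2 * (2*μ*η*k^2 + 1))
            / ((1 + 2*μ*η*kl*ku)^2 * (2*μ*η*k^2)) := by
        field_simp
      rw [e, div_lt_iff₀ (mul_pos hS hx)]
      linarith [key]
    nlinarith [h2]
  · have hp1 : 0 < 1 / (1 + 2*μ*η*kl*ku)^2 * (1 + 2*μ*η*k^2) := by positivity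
    have hp2 : 0 ≤ (2*μ*η*kl*ku)^2 / (1 + 2*μ*η*kl*ku)^2 * (1 + (2*μ*η*k^2)⁻¹) := by
      positivity
    linarith
end
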